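/- arXiv:1804.06291 — 5 statements merged into one kernel-verified Lean document; each statement's English description precedes it below -/
import Mathlib

section
/- Let n ≥ 1, d ∈ ℝⁿ and γ > 0. A vector c ∈ ℝⁿ is a minimizer of the affine-constrained ℓ1 proximal problem if and only if Σᵢ cᵢ = 1 and there exists a scalar β ∈ ℝ such that cᵢ = S_γ(dᵢ − β) for every i. -/
/-!
Soft thresholding is the proximal map of `γ |·|`: with `s = S_γ(a)`, the residual `a - s` is a
subgradient of `γ |·|` at `s`. Hence for `c = S_γ(d - β)` and any `c'` with the same coordinate
sum, the objective satisfies `F(c) + ½ ‖c' - c‖² ≤ F(c')`, the shift by `β` contributing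
`β (∑ c' - ∑ c) = 0`. So such a `c` is the unique minimizer, and a `β` with `∑ S_γ(dᵢ - β) = 1`
exists by the intermediate value theorem, since `S_γ(v)` stays within `γ` of `v`.
-/

open Finset

/-- The soft-thresholding operator `S_γ(v) = sign(v) · max(|v| − γ, 0)`. -/
noncomputable def softThresh (γ v : ℝ) : ℝ := Real.sign v * max (|v| - γ) 0

section SoftThreshold

variable {γ : ℝ}

lemma softThresh_cases (hγ : 0 ≤ γ) (v : ℝ) :
    (γ < v ∧ softThresh γ v = v - γ) ∨ (v < -γ ∧ softThresh γ v = v + γ) ∨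
      (|v| ≤ γ ∧ softThresh γ v = 0) := by
  unfold softThresh
  rcases lt_or_ge γ v with hv | hv
  · left
    rw [Real.sign_of_pos (by linarith), abs_of_pos (by linarith), max_eq_left (by linarith)]
    exact ⟨hv, one_mul _⟩
  rcases lt_or_ge v (-γ) with hv' | hv'
  · right; left
    rw [Real.sign_of_neg (by linarith), abs_of_neg (by linarith), max_eq_left (by linarith)]
    exact ⟨hv', by ring⟩
  · have habs : |v| ≤ γ := abs_le.2 ⟨hv', hv⟩
    right; right
    rw [max_eq_right (by linarith), mul_zero]
    exact ⟨habs, rfl⟩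

lemma softThresh_eq_max_sub_max (hγ : 0 ≤ γ) (v : ℝ) :
    softThresh γ v = max (v - γ) 0 - max (-v - γ) 0 := by
  rcases softThresh_cases hγ v with ⟨hv, hS⟩ | ⟨hv, hS⟩ | ⟨hv, hS⟩ <;> rw [hS]
  · rw [max_eq_left (by linarith), max_eq_right (by linarith), sub_zero]
  · rw [max_eq_right (by linarith), max_eq_left (by linarith)]; ring
  · obtain ⟨h₁, h₂⟩ := abs_le.1 hv
    rw [max_eq_right (by linarith), max_eq_right (by linarith), sub_zero]

lemma continuous_softThresh (hγ : 0 ≤ γ) : Continuous (softThresh γ) := by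
  rw [funext (softThresh_eq_max_sub_max hγ)]
  fun_prop

lemma sub_le_softThresh (hγ : 0 ≤ γ) (v : ℝ) : v - γ ≤ softThresh γ v := by
  rcases softThresh_cases hγ v with ⟨hv, hS⟩ | ⟨hv, hS⟩ | ⟨hv, hS⟩ <;> rw [hS]
  · linarith
  · linarith [(abs_le.1 hv).2]

lemma softThresh_le_add (hγ : 0 ≤ γ) (v : ℝ) : softThresh γ v ≤ v + γ := by
  rcases softThresh_cases hγ v with ⟨hv, hS⟩ | ⟨hv, hS⟩ | ⟨hv, hS⟩ <;> rw [hS]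
  · linarith
  · linarith [(abs_le.1 hv).1]

lemma softThresh_subgradient (hγ : 0 ≤ γ) (a t : ℝ) :
    γ * |softThresh γ a| + (a - softThresh γ a) * (t - softThresh γ a) ≤ γ * |t| := by
  rcases softThresh_cases hγ a with ⟨ha, hS⟩ | ⟨ha, hS⟩ | ⟨ha, hS⟩ <;> rw [hS]
  · rw [abs_of_pos (by linarith)]
    nlinarith [le_abs_self t]
  · rw [abs_of_neg (by linarith)]
    nlinarith [neg_abs_le t]
  · calc γ * |0| + (a - 0) * (t - 0) = a * t := by simp
      _ ≤ |a| * |t| := by rw [← abs_mul]; exact le_abs_self _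
      _ ≤ γ * |t| := mul_le_mul_of_nonneg_right ha (abs_nonneg t)

end SoftThreshold

section ProxProblem

variable {ι : Type*} [Fintype ι] {γ : ℝ}

noncomputable def proxObjective (γ : ℝ) (d c : ι → ℝ) : ℝ :=
  (1/2) * ∑ i, (c i - d i)^2 + γ * ∑ i, |c i|

lemma proxObjective_add_half_sum_sq_le (hγ : 0 ≤ γ) {d c c' : ι → ℝ} {β : ℝ}
    (hc : ∀ i, c i = softThresh γ (d i - β)) (hsum : ∑ i, c' i = ∑ i, c i) :
    proxObjective γ d c + (1/2) * ∑ i, (c' i - c i)^2 ≤ proxObjective γ d c' := by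
  have hsub (i : ι) :
      γ * |c i| + (d i - β - c i) * (c' i - c i) ≤ γ * |c' i| := by
    rw [hc i]; exact softThresh_subgradient hγ _ _
  unfold proxObjective
  calc (1/2) * ∑ i, (c i - d i)^2 + γ * ∑ i, |c i| + (1/2) * ∑ i, (c' i - c i)^2
      = ∑ i, ((1/2) * (c i - d i)^2 + γ * |c i| + (1/2) * (c' i - c i)^2) := by
        simp only [mul_sum, sum_add_distrib]
    _ ≤ ∑ i, ((1/2) * (c' i - d i)^2 + γ * |c' i| + β * (c' i - c i)) :=
        sum_le_sum fun i _ => by linear_combination hsub i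
    _ = (1/2) * ∑ i, (c' i - d i)^2 + γ * ∑ i, |c' i| := by
        simp only [sum_add_distrib, sum_sub_distrib, ← mul_sum, hsum, sub_self, mul_zero,
          add_zero]

lemma eq_of_proxObjective_le (hγ : 0 ≤ γ) {d c c' : ι → ℝ} {β : ℝ}
    (hc : ∀ i, c i = softThresh γ (d i - β)) (hsum : ∑ i, c' i = ∑ i, c i)
    (hle : proxObjective γ d c' ≤ proxObjective γ d c) : c' = c := by
  have hsq_nonneg (i : ι) (_ : i ∈ univ) : 0 ≤ (c' i - c i)^2 := sq_nonneg _
  have hsq : ∑ i, (c' i - c i)^2 = 0 :=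
    le_antisymm (by linarith [proxObjective_add_half_sum_sq_le hγ hc hsum])
      (sum_nonneg hsq_nonneg)
  funext i
  have := (sum_eq_zero_iff_of_nonneg hsq_nonneg).1 hsq i (mem_univ i)
  exact sub_eq_zero.1 (pow_eq_zero_iff two_ne_zero |>.1 this)

lemma exists_sum_softThresh_eq [Nonempty ι] (hγ : 0 ≤ γ) (d : ι → ℝ) (s : ℝ) :
    ∃ β, ∑ i, softThresh γ (d i - β) = s := by
  set φ : ℝ → ℝ := fun β => ∑ i, softThresh γ (d i - β)
  have hφ : Continuous φ :=
    continuous_finsetSum _ fun i _ => (continuous_softThresh hγ).comp (by fun_prop)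
  have hcard : (0 : ℝ) < Fintype.card ι := by exact_mod_cast Fintype.card_pos
  set β₀ := (∑ i, d i - s) / Fintype.card ι with hβ₀_def
  have hβ₀ : ∑ i, (d i - β₀) = s := by
    rw [sum_sub_distrib, sum_const, card_univ, nsmul_eq_mul, hβ₀_def]
    field_simp
    ring
  have h_lower : s ≤ φ (β₀ - γ) := by
    calc s = ∑ i, (d i - (β₀ - γ) - γ) := by rw [← hβ₀]; exact sum_congr rfl fun i _ => by ring
      _ ≤ φ (β₀ - γ) := sum_le_sum fun i _ => sub_le_softThresh hγ _
  have h_upper : φ (β₀ + γ) ≤ s := by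
    calc φ (β₀ + γ) ≤ ∑ i, (d i - (β₀ + γ) + γ) := sum_le_sum fun i _ => softThresh_le_add hγ _
      _ = s := by rw [← hβ₀]; exact sum_congr rfl fun i _ => by ring
  obtain ⟨β, -, hβ⟩ := intermediate_value_Icc' (by linarith : β₀ - γ ≤ β₀ + γ)
    hφ.continuousOn ⟨h_upper, h_lower⟩
  exact ⟨β, hβ⟩

end ProxProblem

theorem stmt2_general (n : ℕ) (d : Fin n → ℝ) (γ : ℝ) (hγ : 0 < γ)
    (c : Fin n → ℝ) :
    ((∑ i, c i = 1) ∧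
      ∀ c' : Fin n → ℝ, (∑ i, c' i = 1) →
        (1/2) * ∑ i, (c i - d i)^2 + γ * ∑ i, |c i|
          ≤ (1/2) * ∑ i, (c' i - d i)^2 + γ * ∑ i, |c' i|)
    ↔ ((∑ i, c i = 1) ∧ ∃ β : ℝ, ∀ i, c i = softThresh γ (d i - β)) := by
  refine ⟨fun ⟨hsum, hmin⟩ => ⟨hsum, ?_⟩, fun ⟨hsum, β, hc⟩ => ⟨hsum, fun c' hsum' => ?_⟩⟩
  · have : Nonempty (Fin n) := by
      by_contra hempty
      simp [not_nonempty_iff.1 hempty] at hsum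
    obtain ⟨β, hβ⟩ := exists_sum_softThresh_eq hγ.le d 1
    exact ⟨β, congrFun (eq_of_proxObjective_le hγ.le (fun _ => rfl) (hsum.trans hβ.symm)
      (hmin _ hβ))⟩
  · have hgap := proxObjective_add_half_sum_sq_le hγ.le hc (hsum'.trans hsum.symm)
    have hsq : 0 ≤ ∑ i, (c' i - c i)^2 := sum_nonneg fun i _ => sq_nonneg _
    unfold proxObjective at hgap
    linarith

/-- `c` is a minimizer of the affine-constrained ℓ1 proximal
problem iff `∑ᵢ cᵢ = 1` and there is a scalar `β` with `cᵢ = S_γ(dᵢ − β)` for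
every `i`. -/
theorem stmt2 (n : ℕ) (hn : 1 ≤ n) (d : Fin n → ℝ) (γ : ℝ) (hγ : 0 < γ)
    (c : Fin n → ℝ) :
    ((∑ i, c i = 1) ∧
      ∀ c' : Fin n → ℝ, (∑ i, c' i = 1) →
        (1/2) * ∑ i, (c i - d i)^2 + γ * ∑ i, |c i|
          ≤ (1/2) * ∑ i, (c' i - d i)^2 + γ * ∑ i, |c' i|)
    ↔ ((∑ i, c i = 1) ∧ ∃ β : ℝ, ∀ i, c i = softThresh γ (d i - β)) :=
  stmt2_general n d γ hγ c
end

section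
/- Let n ≥ 1, d ∈ ℝⁿ and γ > 0, and define f : ℝ → ℝ by f(β) = Σᵢ sign(dᵢ − β)·max(|dᵢ − β| − γ, 0) − 1. Then f(β) → +∞ as β → −∞ and f(β) → −∞ as β → +∞, and consequently there exists β* ∈ ℝ with f(β*) = 0. -/
open Filter

lemma soft_eq (γ x : ℝ) (hγ : 0 < γ) :
    Real.sign x * max (|x| - γ) 0 = max (x - γ) 0 + min (x + γ) 0 := by
  rcases lt_trichotomy x 0 with h | h | h
  · rw [Real.sign_of_neg h, abs_of_neg h]
    rcases le_total (x + γ) 0 with h' | h'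
    · rw [max_eq_left (by linarith), min_eq_left h', max_eq_right (by linarith)]; ring
    · rw [max_eq_right (by linarith), min_eq_right h', max_eq_right (by linarith)]; ring
  · simp [h, min_eq_right hγ.le, hγ.le]
  · rw [Real.sign_of_pos h, abs_of_pos h, min_eq_right (by linarith), one_mul, add_zero]

lemma soft_lb (γ x : ℝ) (hγ : 0 < γ) : x - γ ≤ max (x - γ) 0 + min (x + γ) 0 := by
  rcases le_total (x + γ) 0 with h' | h'
  · rw [min_eq_left h', max_eq_right (by linarith)]; linarith
  · rw [min_eq_right h']; have := le_max_left (x - γ) 0; linarith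

lemma soft_ub (γ x : ℝ) (hγ : 0 < γ) : max (x - γ) 0 + min (x + γ) 0 ≤ x + γ := by
  rcases le_total (x - γ) 0 with h' | h'
  · rw [max_eq_right h']; have := min_le_left (x + γ) 0; linarith
  · rw [max_eq_left h']; have := min_le_right (x + γ) 0; linarith

/-- For `n ≥ 1`, `d ∈ ℝⁿ`, `γ > 0`, the function
`f(β) = ∑ᵢ sign(dᵢ − β)·max(|dᵢ − β| − γ, 0) − 1` tends to `+∞` as `β → −∞`
and to `−∞` as `β → +∞`; consequently it has a root `β*`. -/
theorem stmt4 (n : ℕ) (hn : 1 ≤ n) (d : Fin n → ℝ) (γ : ℝ) (hγ : 0 < γ) :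
    Tendsto (fun β : ℝ =>
        (∑ i, Real.sign (d i - β) * max (|d i - β| - γ) 0) - 1) atBot atTop ∧
    Tendsto (fun β : ℝ =>
        (∑ i, Real.sign (d i - β) * max (|d i - β| - γ) 0) - 1) atTop atBot ∧
    ∃ βstar : ℝ,
        (∑ i, Real.sign (d i - βstar) * max (|d i - βstar| - γ) 0) - 1 = 0 := by
  set f : ℝ → ℝ := fun β =>
    (∑ i, Real.sign (d i - β) * max (|d i - β| - γ) 0) - 1 with hf
  have hfe : ∀ β, f β = (∑ i, (max (d i - β - γ) 0 + min (d i - β + γ) 0)) - 1 := by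
    intro β
    simp only [hf]
    congr 1
    exact Finset.sum_congr rfl fun i _ => soft_eq γ (d i - β) hγ
  have hcont : Continuous f := by
    have : Continuous fun β : ℝ =>
        (∑ i, (max (d i - β - γ) 0 + min (d i - β + γ) 0)) - 1 := by
      apply Continuous.sub _ continuous_const
      apply continuous_finset_sum
      intro i _
      exact ((Continuous.max (by continuity) continuous_const).add
        (Continuous.min (by continuity) continuous_const))
    exact (funext hfe ▸ this)
  have hlb : ∀ β, (∑ i, (d i - β - γ)) - 1 ≤ f β := by
    intro β
    rw [hfe β]
    have := Finset.sum_le_sum (fun i (_ : i ∈ Finset.univ) => soft_lb γ (d i - β) hγ)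
    linarith
  have hub : ∀ β, f β ≤ (∑ i, (d i - β + γ)) - 1 := by
    intro β
    rw [hfe β]
    have := Finset.sum_le_sum (fun i (_ : i ∈ Finset.univ) => soft_ub γ (d i - β) hγ)
    linarith
  have hnpos : (0 : ℝ) < n := by exact_mod_cast hn
  have h1 : Tendsto f atBot atTop := by
    apply tendsto_atTop_mono hlb
    have h0 : Tendsto (fun β : ℝ => (n : ℝ) * (-β)) atBot atTop :=
      (tendsto_neg_atBot_atTop).const_mul_atTop hnpos
    have := tendsto_atTop_add_const_right atBot ((∑ i, d i) - (n : ℝ) * γ - 1) h0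
    convert this using 1
    funext β
    simp [Finset.sum_sub_distrib, Finset.sum_add_distrib]
    ring
  have h2 : Tendsto f atTop atBot := by
    apply tendsto_atBot_mono hub
    have h0 : Tendsto (fun β : ℝ => (n : ℝ) * (-β)) atTop atBot := by
      have := (tendsto_neg_atTop_atBot : Tendsto (fun x : ℝ => -x) atTop atBot)
      exact Tendsto.const_mul_atBot hnpos this
    have := tendsto_atBot_add_const_right atTop ((∑ i, d i) + (n : ℝ) * γ - 1) h0
    convert this using 1
    funext β
    simp [Finset.sum_sub_distrib, Finset.sum_add_distrib]
    ring
  refine ⟨h1, h2, ?_⟩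
  obtain ⟨a, ha⟩ := (h1.eventually_ge_atTop 0).exists
  obtain ⟨b, hb⟩ := (h2.eventually_le_atBot 0).exists
  have hsub := intermediate_value_uIcc (f := f) (a := b) (b := a) hcont.continuousOn
  have h0 : (0 : ℝ) ∈ Set.uIcc (f b) (f a) := Set.mem_uIcc.mpr (Or.inl ⟨hb, ha⟩)
  obtain ⟨βstar, _, hβ⟩ := hsub h0
  exact ⟨βstar, hβ⟩
end

section
/- Let n ≥ 1, d ∈ ℝⁿ and γ > 0, and define f : ℝ → ℝ by f(β) = Σᵢ sign(dᵢ − β)·max(|dᵢ − β| − γ, 0) − 1. If β* ∈ ℝ satisfies f(β*) = 0, then the vector c ∈ ℝⁿ with cᵢ = S_γ(dᵢ − β*) is the unique minimizer of the affine-constrained ℓ1 proximal problem, that is, for every c' ∈ ℝⁿ with Σᵢ c'ᵢ = 1, (1/2)‖c − d‖₂² + γ‖c‖₁ ≤ (1/2)‖c' − d‖₂² + γ‖c'‖₁, with equality only if c' = c. -/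
lemma softThresh_key (γ v x : ℝ) (hγ : 0 < γ) :
    (1/2)*(softThresh γ v - v)^2 + γ*|softThresh γ v| + (1/2)*(x - softThresh γ v)^2
      ≤ (1/2)*(x - v)^2 + γ*|x| := by
  unfold softThresh
  rcases lt_or_ge γ v with h | h
  · rw [Real.sign_of_pos (by linarith), max_eq_left (by cases abs_cases v <;> linarith),
      abs_of_pos (by cases abs_cases v <;> nlinarith : (0:ℝ) < 1*(|v| - γ)),
      abs_of_pos (by linarith : (0:ℝ) < v)]
    nlinarith [le_abs_self x]
  · rcases lt_or_ge v (-γ) with h2 | h2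
    · rw [Real.sign_of_neg (by linarith), max_eq_left (by cases abs_cases v <;> linarith),
        abs_of_neg (by cases abs_cases v <;> nlinarith : (-1)*(|v| - γ) < 0),
        abs_of_neg (by linarith : v < 0)]
      nlinarith [neg_abs_le x]
    · have hm : max (|v| - γ) 0 = 0 := max_eq_right (by cases abs_cases v <;> linarith)
      have h3 : |v| ≤ γ := by cases abs_cases v <;> linarith
      rw [hm, mul_zero, abs_zero]
      nlinarith [le_abs_self (x*v), abs_mul x v,
        mul_le_mul_of_nonneg_left h3 (abs_nonneg x)]

/-- If `β*` is a root of
`f(β) = ∑ᵢ sign(dᵢ − β)·max(|dᵢ − β| − γ, 0) − 1`, then `c` with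
`cᵢ = S_γ(dᵢ − β*)` is the (unique) minimizer of the affine-constrained ℓ1
proximal problem: it is feasible, and for every feasible `c'` the objective
at `c` is `≤` that at `c'`, with equality only if `c' = c`. -/
theorem stmt5 (n : ℕ) (hn : 1 ≤ n) (d : Fin n → ℝ) (γ : ℝ) (hγ : 0 < γ)
    (βstar : ℝ)
    (hroot : (∑ i, Real.sign (d i - βstar) * max (|d i - βstar| - γ) 0) - 1 = 0) :
    (∑ i, softThresh γ (d i - βstar) = 1) ∧
    ∀ c' : Fin n → ℝ, (∑ i, c' i = 1) →
      ((1/2) * ∑ i, (softThresh γ (d i - βstar) - d i)^2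
          + γ * ∑ i, |softThresh γ (d i - βstar)|
        ≤ (1/2) * ∑ i, (c' i - d i)^2 + γ * ∑ i, |c' i|) ∧
      ((1/2) * ∑ i, (c' i - d i)^2 + γ * ∑ i, |c' i|
          = (1/2) * ∑ i, (softThresh γ (d i - βstar) - d i)^2
            + γ * ∑ i, |softThresh γ (d i - βstar)| →
        c' = fun i => softThresh γ (d i - βstar)) := by
  set c : Fin n → ℝ := fun i => softThresh γ (d i - βstar) with hc
  have hfeas : ∑ i, c i = 1 := by
    have he : ∑ i, c i = ∑ i, Real.sign (d i - βstar) * max (|d i - βstar| - γ) 0 := by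
      simp [hc, softThresh]
    linarith
  have hpt : ∀ (x : ℝ) (i : Fin n),
      (1/2)*(c i - d i)^2 + γ*|c i| + (1/2)*(x - c i)^2
        ≤ (1/2)*(x - d i)^2 + γ*|x| + βstar*(x - c i) := by
    intro x i
    have hk := softThresh_key γ (d i - βstar) x hγ
    have hci : c i = softThresh γ (d i - βstar) := rfl
    rw [← hci] at hk
    nlinarith [hk]
  have hsum : ∀ c' : Fin n → ℝ, (∑ i, c' i = 1) →
      (1/2)*∑ i, (c i - d i)^2 + γ*∑ i, |c i| + (1/2)*∑ i, (c' i - c i)^2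
        ≤ (1/2)*∑ i, (c' i - d i)^2 + γ*∑ i, |c' i| := by
    intro c' hc'
    have h1 : ∑ i, ((1/2)*(c i - d i)^2 + γ*|c i| + (1/2)*(c' i - c i)^2)
        ≤ ∑ i, ((1/2)*(c' i - d i)^2 + γ*|c' i| + βstar*(c' i - c i)) :=
      Finset.sum_le_sum fun i _ => hpt (c' i) i
    simp only [Finset.sum_add_distrib, ← Finset.mul_sum, Finset.sum_sub_distrib] at h1
    rw [hc', hfeas] at h1
    linarith
  refine ⟨hfeas, fun c' hc' => ?_⟩
  have hq : (0:ℝ) ≤ ∑ i, (c' i - c i)^2 :=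
    Finset.sum_nonneg fun i _ => sq_nonneg _
  have hs := hsum c' hc'
  constructor
  · linarith
  · intro heq
    have hz : ∑ i, (c' i - c i)^2 = 0 := by linarith
    funext i
    have := (Finset.sum_eq_zero_iff_of_nonneg (fun i _ => sq_nonneg (c' i - c i))).mp hz
      i (Finset.mem_univ i)
    have : c' i - c i = 0 := by nlinarith [this]
    have hci : c i = softThresh γ (d i - βstar) := rfl
    linarith [hci ▸ this]
end

section
/- Let d ∈ ℝⁿ and 1 ≤ k ≤ n. Then the minimum of (1/2)‖c − d‖₂² over the nonconvex set {c ∈ ℝⁿ : ‖c‖₀ ≤ k and Σᵢ cᵢ = 1} equals the minimum over all subsets S ⊆ {1,…,n} with |S| = k of the quantity (1/2)Σ_{i∉S} dᵢ² + (Σ_{i∈S} dᵢ − 1)²/(2k). -/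
/-!
Fix the support: if `c` vanishes off a `k`-set `S` and `∑ c = 1`, then `½‖c − d‖²` splits as
`½∑_{i∉S} dᵢ² + ½∑_{i∈S} (cᵢ − dᵢ)²`, and by Cauchy–Schwarz the second sum is at least
`(∑_{i∈S} dᵢ − 1)²/(2k)`, with equality for the uniform shift `cᵢ = dᵢ + (1 − ∑_{j∈S} dⱼ)/k` on `S`.
Every `c` with `‖c‖₀ ≤ k` is supported in some `k`-set, so both infima run over the same values
up to domination.
-/

open Finset

variable {ι M : Type*}

lemma ncard_support_le_card [Zero M] {c : ι → M} {S : Finset ι} (hc : Function.support c ⊆ S) :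
    (Function.support c).ncard ≤ #S :=
  (Set.ncard_le_ncard hc S.finite_toSet).trans_eq (Set.ncard_coe_finset S)

section Fintype

variable [Fintype ι]

lemma sum_eq_sum_univ_of_support_subset [AddCommMonoid M] {c : ι → M} {S : Finset ι} (hc : Function.support c ⊆ S) :
    ∑ i ∈ S, c i = ∑ i, c i :=
  sum_subset (subset_univ S) fun _ _ hi => Function.notMem_support.mp fun h => hi (hc h)

lemma exists_support_subset_card_eq [Zero M] {c : ι → M} {k : ℕ} (hc : (Function.support c).ncard ≤ k)
    (hk : k ≤ Fintype.card ι) : ∃ S : Finset ι, Function.support c ⊆ S ∧ #S = k := by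
  have hfin := Set.toFinite (Function.support c)
  obtain ⟨S, hsub, hS⟩ := exists_superset_card_eq (n := k)
    (by rwa [← Set.ncard_eq_toFinset_card _ hfin]) hk
  exact ⟨S, fun i hi => hsub (hfin.mem_toFinset.mpr hi), hS⟩

variable [DecidableEq ι]

/-- The minimum of `½‖c − d‖²` over the `c` supported in `S` with `∑ c = 1`. -/
noncomputable def costOn (d : ι → ℝ) (S : Finset ι) : ℝ :=
  (1/2) * ∑ i ∈ Sᶜ, d i ^ 2 + (∑ i ∈ S, d i - 1) ^ 2 / (2 * #S)

lemma sum_sq_sub_eq_of_support_subset {c : ι → ℝ} {S : Finset ι}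
    (hc : Function.support c ⊆ S) (d : ι → ℝ) :
    ∑ i, (c i - d i) ^ 2 = ∑ i ∈ S, (c i - d i) ^ 2 + ∑ i ∈ Sᶜ, d i ^ 2 := by
  rw [← sum_add_sum_compl S]
  congr 1
  refine sum_congr rfl fun i hi => ?_
  rw [Function.notMem_support.mp fun h => (mem_compl.mp hi) (hc h)]
  ring

lemma costOn_le {c : ι → ℝ} {S : Finset ι} (hc : Function.support c ⊆ S)
    (hsum : ∑ i, c i = 1) (d : ι → ℝ) :
    costOn d S ≤ (1/2) * ∑ i, (c i - d i) ^ 2 := by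
  have hCS : (∑ i ∈ S, d i - 1) ^ 2 ≤ #S * ∑ i ∈ S, (c i - d i) ^ 2 := by
    have := sq_sum_le_card_mul_sum_sq (s := S) (f := fun i => c i - d i)
    rwa [sum_sub_distrib, sum_eq_sum_univ_of_support_subset hc, hsum, ← neg_sub, neg_sq] at this
  have hhalf : (∑ i ∈ S, d i - 1) ^ 2 / (2 * #S) ≤ (1/2) * ∑ i ∈ S, (c i - d i) ^ 2 :=
    div_le_of_le_mul₀ (by positivity) (by positivity) (by linarith)
  rw [costOn, sum_sq_sub_eq_of_support_subset hc]
  linarith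

lemma exists_support_subset_cost_eq_costOn {S : Finset ι} (hS : S.Nonempty) (d : ι → ℝ) :
    ∃ c : ι → ℝ, Function.support c ⊆ S ∧ ∑ i, c i = 1 ∧
      (1/2) * ∑ i, (c i - d i) ^ 2 = costOn d S := by
  set t := (1 - ∑ i ∈ S, d i) / #S with ht
  have hcard : (#S : ℝ) ≠ 0 := by exact_mod_cast hS.card_pos.ne'
  let c : ι → ℝ := fun i => if i ∈ S then d i + t else 0
  have hc : Function.support c ⊆ S := fun i hi => by
    by_contra h
    exact hi (if_neg h)
  have hcS : ∀ i ∈ S, c i - d i = t := fun i hi => by simp [c, hi]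
  refine ⟨c, hc, ?_, ?_⟩
  · rw [← sum_eq_sum_univ_of_support_subset hc, sum_congr rfl fun i hi => (sub_eq_iff_eq_add.mp (hcS i hi)),
      sum_add_distrib, sum_const, nsmul_eq_mul, ht]
    field_simp
    ring
  · rw [sum_sq_sub_eq_of_support_subset hc, sum_congr rfl fun i hi => by rw [hcS i hi],
      sum_const, nsmul_eq_mul, costOn, ht]
    field_simp
    ring

end Fintype

/-- For `d ∈ ℝⁿ` and `1 ≤ k ≤ n`, the minimum of
`(1/2)‖c − d‖₂²` over `{c : ‖c‖₀ ≤ k, ∑ᵢ cᵢ = 1}` equals the minimum over all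
`S ⊆ {1,…,n}` with `|S| = k` of `(1/2)∑_{i∉S} dᵢ² + (∑_{i∈S} dᵢ − 1)²/(2k)`. -/
theorem stmt10 (n : ℕ) (d : Fin n → ℝ) (k : ℕ) (hk1 : 1 ≤ k) (hkn : k ≤ n) :
    sInf {y : ℝ | ∃ c : Fin n → ℝ, {i | c i ≠ 0}.ncard ≤ k ∧ (∑ i, c i = 1) ∧
        y = (1/2) * ∑ i, (c i - d i)^2}
    = sInf {y : ℝ | ∃ S : Finset (Fin n), S.card = k ∧
        y = (1/2) * ∑ i ∈ Sᶜ, (d i)^2 + (∑ i ∈ S, d i - 1)^2 / (2 * (k : ℝ))} := by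
  apply csInf_eq_csInf_of_forall_exists_le
  · rintro _ ⟨c, hc, hsum, rfl⟩
    obtain ⟨S, hcS, hS⟩ := exists_support_subset_card_eq hc (by simpa using hkn)
    exact ⟨costOn d S, ⟨S, hS, by rw [costOn, hS]⟩, costOn_le hcS hsum d⟩
  · rintro _ ⟨S, hS, rfl⟩
    obtain ⟨c, hcS, hsum, hcost⟩ :=
      exists_support_subset_cost_eq_costOn (card_pos.mp (hS ▸ hk1)) d
    exact ⟨_, ⟨c, (ncard_support_le_card hcS).trans hS.le, hsum, rfl⟩,
      by rw [hcost, costOn, hS]⟩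
end

section
/- Let X be a real p × n matrix, let λ > 0 and ρ > 0, let M be a real n × n matrix and δ ∈ ℝⁿ, and define ψ on real n × n matrices by ψ(A) = (λ/2)‖X − XA‖_F² + (ρ/2)‖Aᵀ𝟙 − 𝟙‖₂² + (ρ/2)‖A − M‖_F² + δᵀ(Aᵀ𝟙 − 𝟙). Then the matrix λXᵀX + ρI + ρ𝟙𝟙ᵀ is positive definite (hence invertible), ψ is strictly convex with a unique minimizer A*, and A* is characterized by the normal equations (λXᵀX + ρI + ρ𝟙𝟙ᵀ)A* = λXᵀX + ρ(𝟙𝟙ᵀ + M) − 𝟙δᵀ. -/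
/-!
`ψ` is an exact quadratic: with `H = λXᵀX + ρI + ρ𝟙𝟙ᵀ` and `B = λXᵀX + ρ(𝟙𝟙ᵀ + M) − 𝟙δᵀ`,
`ψ(A + D) = ψ(A) + ⟪HA − B, D⟫ + ⟪D, HD⟫ / 2` for the Frobenius pairing `⟪U, V⟫ = vec U ⬝ vec V`.
`H` is `ρI` plus two Gram matrices, hence positive definite, and then so is
`⟪D, HD⟫ = vec Dᵀ (I ⊗ H) vec D`. A function with such an expansion is strictly convex, and `A`
minimizes it iff the linear term `⟪HA − B, ·⟫` vanishes, i.e. iff `HA = B`; as `H` is invertible,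
this has exactly one solution.
-/

open Matrix Set

section QuadraticExpansion

variable {E : Type*} [AddCommGroup E] [Module ℝ E] {f Q : E → ℝ} {ℓ : E → Module.Dual ℝ E}

theorem strictConvexOn_univ_of_quadratic_expansion
    (hf : ∀ x d, f (x + d) = f x + ℓ x d + Q d / 2)
    (hQ_smul : ∀ (c : ℝ) d, Q (c • d) = c ^ 2 * Q d) (hQ_pos : ∀ d, d ≠ 0 → 0 < Q d) :
    StrictConvexOn ℝ univ f := by
  refine ⟨convex_univ, fun x _ y _ hxy a b ha hb hab => ?_⟩
  set z := a • x + b • y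
  have hx : z + b • (x - y) = x := by linear_combination (norm := module) hab • x
  have hy : z + (-a) • (x - y) = y := by linear_combination (norm := module) hab • y
  have ex := hf z (b • (x - y))
  have ey := hf z ((-a) • (x - y))
  rw [hx, map_smul, hQ_smul, smul_eq_mul] at ex
  rw [hy, map_smul, hQ_smul, smul_eq_mul] at ey
  have hcomb : a * f x + b * f y = f z + a * b * Q (x - y) / 2 := by
    linear_combination a * ex + b * ey + (f z + a * b * Q (x - y) / 2) * hab
  have hQ := hQ_pos _ (sub_ne_zero.mpr hxy)
  rw [smul_eq_mul, smul_eq_mul, hcomb]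
  linarith [mul_pos (mul_pos ha hb) hQ]

theorem forall_le_iff_of_quadratic_expansion
    (hf : ∀ x d, f (x + d) = f x + ℓ x d + Q d / 2)
    (hQ_smul : ∀ (c : ℝ) d, Q (c • d) = c ^ 2 * Q d) (hQ_nonneg : ∀ d, 0 ≤ Q d) (x : E) :
    (∀ y, f x ≤ f y) ↔ ℓ x = 0 := by
  refine ⟨fun hmin => LinearMap.ext fun d => ?_, fun hℓ y => ?_⟩
  · have hdiscrim : discrim (Q d / 2) (ℓ x d) 0 ≤ 0 := discrim_le_zero fun t => by
      have := hmin (x + t • d)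
      rw [hf, map_smul, hQ_smul, smul_eq_mul] at this
      linarith
    rw [discrim] at hdiscrim
    rw [LinearMap.zero_apply]
    nlinarith [sq_nonneg (ℓ x d)]
  · have := hf x (y - x)
    rw [add_sub_cancel, hℓ, LinearMap.zero_apply] at this
    linarith [hQ_nonneg (y - x)]

end QuadraticExpansion

namespace Matrix

variable {m n k R : Type*} [Fintype m] [Fintype n] [Fintype k] [CommSemiring R]

theorem sum_sum_sq_eq_vec_dotProduct_vec (U : Matrix m n R) :
    ∑ i, ∑ j, U i j ^ 2 = vec U ⬝ᵥ vec U := by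
  simp [dotProduct, Fintype.sum_prod_type, sq, Finset.sum_comm (γ := m)]

theorem vec_transpose_mul_dotProduct (C : Matrix k m R) (U : Matrix k n R) (V : Matrix m n R) :
    vec (Cᵀ * U) ⬝ᵥ vec V = vec U ⬝ᵥ vec (C * V) := by
  rw [vec_dotProduct_vec, vec_dotProduct_vec, transpose_mul, transpose_transpose, Matrix.mul_assoc]

theorem vec_vecMulVec_dotProduct (u : m → R) (v : n → R) (D : Matrix m n R) :
    vec (vecMulVec u v) ⬝ᵥ vec D = v ⬝ᵥ (u ᵥ* D) := by
  simp [dotProduct, vecMul, vecMulVec_apply, Fintype.sum_prod_type, Finset.mul_sum, mul_assoc,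
    mul_left_comm]

theorem dotProduct_add_add_self (u v : n → R) :
    (u + v) ⬝ᵥ (u + v) = u ⬝ᵥ u + 2 * (u ⬝ᵥ v) + v ⬝ᵥ v := by
  rw [add_dotProduct, dotProduct_add, dotProduct_add, dotProduct_comm v u]; ring

theorem vec_smul_dotProduct_vec_mul_smul (H : Matrix n n R) (c : R) (D : Matrix n k R) :
    vec (c • D) ⬝ᵥ vec (H * (c • D)) = c ^ 2 * (vec D ⬝ᵥ vec (H * D)) := by
  simp only [vec_smul, Matrix.mul_smul, smul_dotProduct, dotProduct_smul, smul_eq_mul]; ring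

def frobeniusDual (G : Matrix m n R) : Module.Dual R (Matrix m n R) where
  toFun D := vec G ⬝ᵥ vec D
  map_add' D D' := by simp [dotProduct_add]
  map_smul' c D := by simp

theorem frobeniusDual_eq_zero_iff {G : Matrix m n ℝ} : frobeniusDual G = 0 ↔ G = 0 := by
  refine ⟨fun h => ?_, fun h => by ext D; simp [frobeniusDual, h]⟩
  simpa [frobeniusDual] using LinearMap.congr_fun h G

theorem PosSemidef.vec_dotProduct_vec_mul_nonneg {H : Matrix n n ℝ} (hH : H.PosSemidef)
    (D : Matrix n k ℝ) : 0 ≤ vec D ⬝ᵥ vec (H * D) := by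
  classical
  simpa [vec_mul_eq_mulVec] using (PosSemidef.one.kronecker hH).dotProduct_mulVec_nonneg (vec D)

theorem PosDef.vec_dotProduct_vec_mul_pos {H : Matrix n n ℝ} (hH : H.PosDef) {D : Matrix n k ℝ}
    (hD : D ≠ 0) : 0 < vec D ⬝ᵥ vec (H * D) := by
  classical
  simpa [vec_mul_eq_mulVec] using
    (PosDef.one.kronecker hH).dotProduct_mulVec_pos (vec_eq_zero_iff.not.mpr hD)

end Matrix

section AdmmSubproblem

variable {m n : Type*} [Fintype m] [Fintype n]
  (X : Matrix m n ℝ) (lam ρ : ℝ) (M : Matrix n n ℝ) (δ : n → ℝ)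

noncomputable def admmObjective (A : Matrix n n ℝ) : ℝ :=
  (lam / 2) * (∑ i, ∑ j, ((X - X * A) i j)^2)
    + (ρ / 2) * (∑ j, (∑ i, A i j - 1)^2)
    + (ρ / 2) * (∑ i, ∑ j, ((A - M) i j)^2)
    + ∑ j, δ j * (∑ i, A i j - 1)

theorem admmObjective_eq_vec_dotProduct (A : Matrix n n ℝ) :
    admmObjective X lam ρ M δ A =
      lam / 2 * (vec (X * A - X) ⬝ᵥ vec (X * A - X))
        + ρ / 2 * ((1 ᵥ* A - 1) ⬝ᵥ (1 ᵥ* A - 1))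
        + ρ / 2 * (vec (A - M) ⬝ᵥ vec (A - M)) + δ ⬝ᵥ (1 ᵥ* A - 1) := by
  have hcol (j : n) : ∑ i, A i j - 1 = (1 ᵥ* A - 1) j := by simp [vecMul, dotProduct]
  simp only [admmObjective, ← neg_sub (X * A) X, Matrix.neg_apply, neg_sq,
    sum_sum_sq_eq_vec_dotProduct_vec, hcol]
  simp only [dotProduct, sq]

variable [DecidableEq n]

def admmHessian : Matrix n n ℝ :=
  lam • (Xᵀ * X) + ρ • (1 : Matrix n n ℝ) + ρ • vecMulVec (1 : n → ℝ) 1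

def admmRhs : Matrix n n ℝ :=
  lam • (Xᵀ * X) + ρ • (vecMulVec (1 : n → ℝ) 1 + M) - vecMulVec (1 : n → ℝ) δ

variable {X lam ρ} in
theorem posDef_admmHessian (hlam : 0 ≤ lam) (hρ : 0 < ρ) : (admmHessian X lam ρ).PosDef :=
  ((PosDef.one.smul hρ).posSemidef_add ((posSemidef_conjTranspose_mul_self X).smul hlam))
    |>.add_posSemidef ((posSemidef_vecMulVec_self_star 1).smul hρ.le)

theorem admmHessian_mul (D : Matrix n n ℝ) :
    admmHessian X lam ρ * D = lam • (Xᵀ * (X * D)) + ρ • D + ρ • vecMulVec 1 (1 ᵥ* D) := by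
  simp only [admmHessian, Matrix.add_mul, Matrix.smul_mul, Matrix.one_mul, Matrix.mul_assoc,
    vecMulVec_mul]

theorem admmHessian_mul_sub_admmRhs (A : Matrix n n ℝ) :
    admmHessian X lam ρ * A - admmRhs X lam ρ M δ =
      lam • (Xᵀ * (X * A - X)) + ρ • vecMulVec 1 (1 ᵥ* A - 1) + ρ • (A - M)
        + vecMulVec 1 δ := by
  rw [admmHessian_mul, admmRhs, Matrix.mul_sub, vecMulVec_sub]
  module

theorem admmObjective_add (A D : Matrix n n ℝ) :
    admmObjective X lam ρ M δ (A + D) = admmObjective X lam ρ M δ A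
      + frobeniusDual (admmHessian X lam ρ * A - admmRhs X lam ρ M δ) D
      + vec D ⬝ᵥ vec (admmHessian X lam ρ * D) / 2 := by
  have hX : vec (X * (A + D) - X) = vec (X * A - X) + vec (X * D) := by
    rw [Matrix.mul_add, add_sub_right_comm]; rfl
  have hcol : 1 ᵥ* (A + D) - 1 = (1 ᵥ* A - 1) + 1 ᵥ* D := by rw [vecMul_add]; abel
  have hM : vec (A + D - M) = vec (A - M) + vec D := by rw [add_sub_right_comm]; rfl
  rw [admmObjective_eq_vec_dotProduct, admmObjective_eq_vec_dotProduct, hX, hcol, hM,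
    frobeniusDual, LinearMap.coe_mk, AddHom.coe_mk, admmHessian_mul_sub_admmRhs, admmHessian_mul,
    dotProduct_add_add_self, dotProduct_add_add_self, dotProduct_add_add_self]
  simp only [vec_add, vec_smul, add_dotProduct, dotProduct_add, smul_dotProduct, dotProduct_smul,
    smul_eq_mul, vec_transpose_mul_dotProduct, vec_vecMulVec_dotProduct]
  rw [dotProduct_comm (vec D) (vec (Xᵀ * _)), vec_transpose_mul_dotProduct,
    dotProduct_comm (vec D) (vec (vecMulVec _ _)), vec_vecMulVec_dotProduct]
  ring

end AdmmSubproblem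

/-- the ADMM `A`-update subproblem
`ψ(A) = (λ/2)‖X − XA‖_F² + (ρ/2)‖Aᵀ𝟙 − 𝟙‖₂² + (ρ/2)‖A − M‖_F² + δᵀ(Aᵀ𝟙 − 𝟙)`
has a positive definite (hence invertible) Hessian `λXᵀX + ρI + ρ𝟙𝟙ᵀ`, is
strictly convex with a unique minimizer, and its minimizers are exactly the
solutions of the normal equations
`(λXᵀX + ρI + ρ𝟙𝟙ᵀ)A = λXᵀX + ρ(𝟙𝟙ᵀ + M) − 𝟙δᵀ`. -/
theorem stmt16 (n p : ℕ) (X : Matrix (Fin p) (Fin n) ℝ)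
    (lam ρ : ℝ) (hlam : 0 < lam) (hρ : 0 < ρ)
    (M : Matrix (Fin n) (Fin n) ℝ) (δ : Fin n → ℝ)
    (ψ : Matrix (Fin n) (Fin n) ℝ → ℝ)
    (hψ : ψ = fun A =>
      (lam / 2) * (∑ i, ∑ j, ((X - X * A) i j)^2)
        + (ρ / 2) * (∑ j, (∑ i, A i j - 1)^2)
        + (ρ / 2) * (∑ i, ∑ j, ((A - M) i j)^2)
        + ∑ j, δ j * (∑ i, A i j - 1)) :
    (lam • (Xᵀ * X) + ρ • (1 : Matrix (Fin n) (Fin n) ℝ)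
        + ρ • vecMulVec (1 : Fin n → ℝ) 1).PosDef ∧
    IsUnit (lam • (Xᵀ * X) + ρ • (1 : Matrix (Fin n) (Fin n) ℝ)
        + ρ • vecMulVec (1 : Fin n → ℝ) 1) ∧
    StrictConvexOn ℝ Set.univ ψ ∧
    (∃! Astar : Matrix (Fin n) (Fin n) ℝ, ∀ A, ψ Astar ≤ ψ A) ∧
    (∀ Astar : Matrix (Fin n) (Fin n) ℝ,
      (∀ A, ψ Astar ≤ ψ A) ↔
        (lam • (Xᵀ * X) + ρ • (1 : Matrix (Fin n) (Fin n) ℝ)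
            + ρ • vecMulVec (1 : Fin n → ℝ) 1) * Astar
          = lam • (Xᵀ * X) + ρ • (vecMulVec (1 : Fin n → ℝ) 1 + M)
            - vecMulVec (1 : Fin n → ℝ) δ) := by
  obtain rfl : ψ = admmObjective X lam ρ M δ := hψ
  set H := admmHessian X lam ρ
  have hH : H.PosDef := posDef_admmHessian hlam.le hρ
  have hexp := admmObjective_add X lam ρ M δ
  have hmin (Astar : Matrix (Fin n) (Fin n) ℝ) :
      (∀ A, admmObjective X lam ρ M δ Astar ≤ admmObjective X lam ρ M δ A) ↔
        H * Astar = admmRhs X lam ρ M δ :=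
    (forall_le_iff_of_quadratic_expansion hexp (vec_smul_dotProduct_vec_mul_smul H)
      hH.posSemidef.vec_dotProduct_vec_mul_nonneg Astar).trans
      (frobeniusDual_eq_zero_iff.trans sub_eq_zero)
  have hdet : IsUnit H.det := hH.det_pos.ne'.isUnit
  refine ⟨hH, hH.isUnit, ?_, ?_, hmin⟩
  · exact strictConvexOn_univ_of_quadratic_expansion hexp (vec_smul_dotProduct_vec_mul_smul H)
      fun _ => hH.vec_dotProduct_vec_mul_pos
  · refine (existsUnique_congr hmin).mpr ⟨H⁻¹ * admmRhs X lam ρ M δ,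
      mul_nonsing_inv_cancel_left _ _ hdet, fun A hA => ?_⟩
    rw [← hA, nonsing_inv_mul_cancel_left _ _ hdet]
end
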